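/- arXiv:2207.05437 — 3 statements merged into one kernel-verified Lean document; each statement's English description precedes it below -/
import Mathlib

section
/- Let m ≤ n be positive integers, let α : [n] → [0,1] satisfy α_1 > α_2 > ⋯ > α_m > α_{m+1} ≥ ⋯ ≥ α_n, and let β : [m+1] → [0,1] satisfy β_1 > β_2 > ⋯ > β_m > β_{m+1} = 0. Define Δ_{i,j} = (β_j − β_{j+1})(α_j − α_i) if j < i, Δ_{i,j} = 0 if j = i, and Δ_{i,j} = (β_{j−1} − β_j)(α_i − α_j) if j > i. Then for any injective sequence i_1, …, i_m of elements of [n], ∑_{j=1}^m (α_j β_j − α_{i_j} β_j) ≥ (1/2) ∑_{j=1}^m Δ_{i_j, j}. -/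
/-!
Write `d k = β k - β (k + 1) ≥ 0` and `S k = ∑_{j ≤ k} (α j - α (σ j))` (`prefixDeficit`).
Since `β (m + 1) = 0`, summation by parts turns the regret into `∑_k d k * S k`. Cancelling the
items that `σ` keeps inside the top `k` positions, `S k` is the total attractiveness of the items
of `[1, k]` missing from `σ [1, k]` minus that of the equally many items of `σ [1, k]` outside
`[1, k]`; every item of the first kind beats every item of the second, so `S k ≥ 0` and `S k`
dominates the gap of any single pair. A gap `Δ (σ j) j` is such a single pair at level `k = j`
when `j < σ j`, and at level `k = j - 1` when `σ j < j`, so `∑_j Δ (σ j) j ≤ 2 ∑_k d k * S k`.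
-/

open Finset

section Exchange

variable {ι : Type*} {f : ι → ℝ} {c : ℝ}

theorem Finset.sum_le_sum_of_card_eq {D E : Finset ι} (hcard : #D = #E)
    (hD : ∀ i ∈ D, c ≤ f i) (hE : ∀ i ∈ E, f i ≤ c) :
    ∑ i ∈ E, f i ≤ ∑ i ∈ D, f i :=
  calc ∑ i ∈ E, f i ≤ #E • c := sum_le_card_nsmul E f c hE
    _ = #D • c := by rw [hcard]
    _ ≤ ∑ i ∈ D, f i := card_nsmul_le_sum D f c hD

theorem Finset.sub_le_sum_sub_sum_of_card_eq [DecidableEq ι] {D E : Finset ι} (hcard : #D = #E)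
    (hD : ∀ i ∈ D, c ≤ f i) (hE : ∀ i ∈ E, f i ≤ c) {p q : ι} (hp : p ∈ D) (hq : q ∈ E) :
    f p - f q ≤ ∑ i ∈ D, f i - ∑ i ∈ E, f i := by
  have hrest : ∑ i ∈ E.erase q, f i ≤ ∑ i ∈ D.erase p, f i :=
    sum_le_sum_of_card_eq (by rw [card_erase_of_mem hp, card_erase_of_mem hq, hcard])
      (fun i hi ↦ hD i (mem_of_mem_erase hi)) (fun i hi ↦ hE i (mem_of_mem_erase hi))
  rw [← add_sum_erase D f hp, ← add_sum_erase E f hq]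
  linarith

theorem Finset.sum_sub_comp_eq_sum_sdiff_sub_sum_sdiff [DecidableEq ι] {s : Finset ι}
    {σ : ι → ι} (hσ : Set.InjOn σ s) :
    ∑ j ∈ s, (f j - f (σ j)) = ∑ i ∈ s \ s.image σ, f i - ∑ i ∈ s.image σ \ s, f i := by
  rw [sum_sdiff_sub_sum_sdiff, sum_sub_distrib, sum_image hσ]

theorem Finset.card_sdiff_image_eq [DecidableEq ι] {s : Finset ι} {σ : ι → ι}
    (hσ : Set.InjOn σ s) : #(s \ s.image σ) = #(s.image σ \ s) :=
  card_sdiff_comm (card_image_of_injOn hσ).symm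

end Exchange

theorem Finset.sum_Icc_one_mul_by_parts (x β : ℕ → ℝ) (m : ℕ) :
    ∑ j ∈ Icc 1 m, x j * β j =
      ∑ k ∈ Icc 1 m, (β k - β (k + 1)) * ∑ j ∈ Icc 1 k, x j + β (m + 1) * ∑ j ∈ Icc 1 m, x j := by
  induction m with
  | zero => simp
  | succ m ih =>
    rw [sum_Icc_succ_top (by omega), sum_Icc_succ_top (by omega), sum_Icc_succ_top (by omega), ih]
    ring

theorem Finset.sum_Icc_one_comp_sub_one_add (T : ℕ → ℝ) (m : ℕ) :
    ∑ j ∈ Icc 1 m, T (j - 1) + T m = ∑ j ∈ Icc 1 m, T j + T 0 := by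
  induction m with
  | zero => simp
  | succ m ih =>
    rw [sum_Icc_succ_top (by omega), sum_Icc_succ_top (by omega), Nat.add_sub_cancel]
    linarith

section PBM

variable {n m : ℕ} {α : ℕ → ℝ} {σ : ℕ → ℕ}

def prefixDeficit (α : ℕ → ℝ) (σ : ℕ → ℕ) (k : ℕ) : ℝ :=
  ∑ j ∈ Icc 1 k, (α j - α (σ j))

theorem prefixDeficit_eq_sum_sdiff_sub_sum_sdiff (hσinj : Set.InjOn σ (Icc 1 m)) {k : ℕ}
    (hk : k ≤ m) :
    prefixDeficit α σ k =
      ∑ i ∈ Icc 1 k \ (Icc 1 k).image σ, α i - ∑ i ∈ (Icc 1 k).image σ \ Icc 1 k, α i :=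
  sum_sub_comp_eq_sum_sdiff_sub_sum_sdiff
    (hσinj.mono (coe_subset.2 (Icc_subset_Icc_right hk)))

theorem mem_image_sdiff_Icc (hσrange : ∀ j ∈ Icc 1 m, σ j ∈ Icc 1 n) {k q : ℕ} (hk : k ≤ m)
    (hq : q ∈ (Icc 1 k).image σ \ Icc 1 k) : k + 1 ≤ q ∧ q ≤ n := by
  obtain ⟨hqσ, hqk⟩ := mem_sdiff.1 hq
  obtain ⟨j, hj, rfl⟩ := mem_image.1 hqσ
  have := mem_Icc.1 (hσrange j (Icc_subset_Icc_right hk hj))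
  simp only [mem_Icc, not_and, not_le] at hqk
  omega

theorem prefixDeficit_exchange (hmn : m ≤ n) (hα : AntitoneOn α (Set.Icc 1 n))
    (hσinj : Set.InjOn σ (Icc 1 m)) (hσrange : ∀ j ∈ Icc 1 m, σ j ∈ Icc 1 n) {k : ℕ}
    (hk : k ≤ m) :
    0 ≤ prefixDeficit α σ k ∧
      ∀ p ∈ Icc 1 k \ (Icc 1 k).image σ, ∀ q ∈ (Icc 1 k).image σ \ Icc 1 k,
        α p - α q ≤ prefixDeficit α σ k := by
  have hcard := card_sdiff_image_eq (hσinj.mono (coe_subset.2 (Icc_subset_Icc_right hk)))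
  have hD : ∀ i ∈ Icc 1 k \ (Icc 1 k).image σ, α k ≤ α i := fun i hi ↦ by
    have := mem_Icc.1 (mem_sdiff.1 hi).1
    exact hα ⟨this.1, by omega⟩ ⟨by omega, by omega⟩ this.2
  have hE : ∀ q ∈ (Icc 1 k).image σ \ Icc 1 k, α q ≤ α k := fun q hq ↦ by
    obtain ⟨hkq, hqn⟩ := mem_image_sdiff_Icc hσrange hk hq
    obtain ⟨j, hj, -⟩ := mem_image.1 (mem_sdiff.1 hq).1
    have := mem_Icc.1 hj
    exact hα ⟨by omega, by omega⟩ ⟨by omega, hqn⟩ (by omega)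
  rw [prefixDeficit_eq_sum_sdiff_sub_sum_sdiff hσinj hk]
  exact ⟨sub_nonneg.2 (sum_le_sum_of_card_eq hcard hD hE),
    fun p hp q hq ↦ sub_le_sum_sub_sum_of_card_eq hcard hD hE hp hq⟩

theorem sub_le_prefixDeficit_of_lt (hmn : m ≤ n) (hα : AntitoneOn α (Set.Icc 1 n))
    (hσinj : Set.InjOn σ (Icc 1 m)) (hσrange : ∀ j ∈ Icc 1 m, σ j ∈ Icc 1 n) {k : ℕ}
    (hk : k ∈ Icc 1 m) (hlt : k < σ k) :
    α k - α (σ k) ≤ prefixDeficit α σ k := by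
  obtain ⟨hk1, hkm⟩ := mem_Icc.1 hk
  have hq : σ k ∈ (Icc 1 k).image σ \ Icc 1 k :=
    mem_sdiff.2 ⟨mem_image_of_mem σ (mem_Icc.2 ⟨hk1, le_rfl⟩), by simp only [mem_Icc]; omega⟩
  obtain ⟨p, hp⟩ : (Icc 1 k \ (Icc 1 k).image σ).Nonempty := by
    rw [← card_pos, card_sdiff_image_eq (hσinj.mono (coe_subset.2 (Icc_subset_Icc_right hkm)))]
    exact card_pos.2 ⟨_, hq⟩
  have hpk : α k ≤ α p := by
    have := mem_Icc.1 (mem_sdiff.1 hp).1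
    exact hα ⟨this.1, by omega⟩ ⟨hk1, by omega⟩ this.2
  linarith [(prefixDeficit_exchange hmn hα hσinj hσrange hkm).2 p hp _ hq]

theorem sub_le_prefixDeficit_of_gt (hmn : m ≤ n) (hα : AntitoneOn α (Set.Icc 1 n))
    (hσinj : Set.InjOn σ (Icc 1 m)) (hσrange : ∀ j ∈ Icc 1 m, σ j ∈ Icc 1 n) {k : ℕ}
    (hk : k + 1 ∈ Icc 1 m) (hlt : σ (k + 1) < k + 1) :
    α (σ (k + 1)) - α (k + 1) ≤ prefixDeficit α σ k := by
  have hkm : k ≤ m := by have := mem_Icc.1 hk; omega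
  have hp : σ (k + 1) ∈ Icc 1 k \ (Icc 1 k).image σ := by
    refine mem_sdiff.2 ⟨?_, fun hmem ↦ ?_⟩
    · have := mem_Icc.1 (hσrange _ hk); exact mem_Icc.2 ⟨this.1, by omega⟩
    · obtain ⟨j, hj, hjk⟩ := mem_image.1 hmem
      have := mem_Icc.1 hj
      have := hσinj (coe_subset.2 (Icc_subset_Icc_right hkm) hj) hk hjk
      omega
  obtain ⟨q, hq⟩ : ((Icc 1 k).image σ \ Icc 1 k).Nonempty := by
    rw [← card_pos, ← card_sdiff_image_eq (hσinj.mono (coe_subset.2 (Icc_subset_Icc_right hkm)))]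
    exact card_pos.2 ⟨_, hp⟩
  have hqk : α q ≤ α (k + 1) := by
    obtain ⟨hkq, hqn⟩ := mem_image_sdiff_Icc hσrange hkm hq
    exact hα ⟨by omega, by omega⟩ ⟨by omega, hqn⟩ hkq
  linarith [(prefixDeficit_exchange hmn hα hσinj hσrange hkm).2 _ hp q hq]

def weightedDeficit (α β : ℕ → ℝ) (σ : ℕ → ℕ) (k : ℕ) : ℝ :=
  (β k - β (k + 1)) * prefixDeficit α σ k

theorem weightedDeficit_zero (α β : ℕ → ℝ) (σ : ℕ → ℕ) : weightedDeficit α β σ 0 = 0 := by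
  simp [weightedDeficit, prefixDeficit]

theorem weightedDeficit_nonneg {β : ℕ → ℝ} (hmn : m ≤ n) (hα : AntitoneOn α (Set.Icc 1 n))
    (hβ : ∀ k ∈ Icc 1 m, β (k + 1) ≤ β k) (hσinj : Set.InjOn σ (Icc 1 m))
    (hσrange : ∀ j ∈ Icc 1 m, σ j ∈ Icc 1 n) {k : ℕ} (hk : k ≤ m) :
    0 ≤ weightedDeficit α β σ k := by
  rcases Nat.eq_zero_or_pos k with rfl | hk1
  · exact (weightedDeficit_zero α β σ).ge
  · exact mul_nonneg (sub_nonneg.2 (hβ k (mem_Icc.2 ⟨hk1, hk⟩)))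
      (prefixDeficit_exchange hmn hα hσinj hσrange hk).1

theorem sum_regret_eq_sum_weightedDeficit {β : ℕ → ℝ} (hβlast : β (m + 1) = 0) :
    ∑ j ∈ Icc 1 m, (α j * β j - α (σ j) * β j) = ∑ k ∈ Icc 1 m, weightedDeficit α β σ k :=
  calc ∑ j ∈ Icc 1 m, (α j * β j - α (σ j) * β j)
      = ∑ j ∈ Icc 1 m, (α j - α (σ j)) * β j := sum_congr rfl fun _ _ ↦ by ring
    _ = ∑ k ∈ Icc 1 m, weightedDeficit α β σ k := by
      rw [sum_Icc_one_mul_by_parts, hβlast, zero_mul, add_zero]; rfl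

def pbmGap (α β : ℕ → ℝ) (i j : ℕ) : ℝ :=
  if j < i then (β j - β (j + 1)) * (α j - α i)
  else if j = i then 0
  else (β (j - 1) - β j) * (α i - α j)

theorem pbmGap_le_weightedDeficit {β : ℕ → ℝ} (hmn : m ≤ n) (hα : AntitoneOn α (Set.Icc 1 n))
    (hβ : ∀ k ∈ Icc 1 m, β (k + 1) ≤ β k) (hσinj : Set.InjOn σ (Icc 1 m))
    (hσrange : ∀ j ∈ Icc 1 m, σ j ∈ Icc 1 n) {j : ℕ} (hj : j ∈ Icc 1 m) :
    pbmGap α β (σ j) j ≤ weightedDeficit α β σ j + weightedDeficit α β σ (j - 1) := by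
  obtain ⟨hj1, hjm⟩ := mem_Icc.1 hj
  have hWj := weightedDeficit_nonneg hmn hα hβ hσinj hσrange hjm
  have hWj' := weightedDeficit_nonneg hmn hα hβ hσinj hσrange (k := j - 1) (by omega)
  unfold pbmGap
  split_ifs with hlt heq
  · have := mul_le_mul_of_nonneg_left (sub_le_prefixDeficit_of_lt hmn hα hσinj hσrange hj hlt)
      (sub_nonneg.2 (hβ j hj))
    unfold weightedDeficit at hWj' ⊢
    linarith
  · linarith
  · obtain ⟨k, rfl⟩ : ∃ k, j = k + 1 := ⟨j - 1, by omega⟩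
    have hk1 : 1 ≤ k := by have := mem_Icc.1 (hσrange _ hj); omega
    have := mul_le_mul_of_nonneg_left
      (sub_le_prefixDeficit_of_gt hmn hα hσinj hσrange hj (by omega))
      (sub_nonneg.2 (hβ k (mem_Icc.2 ⟨hk1, by omega⟩)))
    rw [Nat.add_sub_cancel] at hWj' ⊢
    unfold weightedDeficit at hWj ⊢
    linarith

end PBM

theorem pbm_self_bounding_general
    (n m : ℕ) (hmn : m ≤ n)
    (α β : ℕ → ℝ)
    (hαstrict : ∀ i, 1 ≤ i → i ≤ m → α i > α (i + 1))
    (hαmono : ∀ i, m + 1 ≤ i → i < n → α i ≥ α (i + 1))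
    (hβstrict : ∀ j, 1 ≤ j → j ≤ m → β j > β (j + 1))
    (hβlast : β (m + 1) = 0)
    (Δ : ℕ → ℕ → ℝ)
    (hΔ : ∀ i j, Δ i j =
      if j < i then (β j - β (j + 1)) * (α j - α i)
      else if j = i then 0
      else (β (j - 1) - β j) * (α i - α j))
    (σ : ℕ → ℕ)
    (hσinj : Set.InjOn σ (Finset.Icc 1 m))
    (hσrange : ∀ j ∈ Finset.Icc 1 m, σ j ∈ Finset.Icc 1 n) :
    ∑ j ∈ Finset.Icc 1 m, (α j * β j - α (σ j) * β j)
      ≥ (1 / 2) * ∑ j ∈ Finset.Icc 1 m, Δ (σ j) j := by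
  have hα : AntitoneOn α (Set.Icc 1 n) :=
    antitoneOn_of_add_one_le Set.ordConnected_Icc fun i _ hi hi' ↦ by
      rcases le_or_gt i m with h | h
      · exact (hαstrict i hi.1 h).le
      · exact hαmono i h (Nat.lt_of_succ_le hi'.2)
  have hβ : ∀ k ∈ Icc 1 m, β (k + 1) ≤ β k :=
    fun k hk ↦ (hβstrict k (mem_Icc.1 hk).1 (mem_Icc.1 hk).2).le
  have hgap : ∀ j ∈ Icc 1 m,
      Δ (σ j) j ≤ weightedDeficit α β σ j + weightedDeficit α β σ (j - 1) :=
    fun j hj ↦ (hΔ _ _).trans_le (pbmGap_le_weightedDeficit hmn hα hβ hσinj hσrange hj)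
  have hWm := weightedDeficit_nonneg hmn hα hβ hσinj hσrange le_rfl
  have hshift := sum_Icc_one_comp_sub_one_add (weightedDeficit α β σ) m
  rw [weightedDeficit_zero] at hshift
  rw [ge_iff_le, sum_regret_eq_sum_weightedDeficit hβlast]
  calc (1 / 2) * ∑ j ∈ Icc 1 m, Δ (σ j) j
      ≤ (1 / 2) * (∑ j ∈ Icc 1 m, weightedDeficit α β σ j
          + ∑ j ∈ Icc 1 m, weightedDeficit α β σ (j - 1)) := by
        rw [← sum_add_distrib]; gcongr with j hj; exact hgap j hj
    _ ≤ ∑ k ∈ Icc 1 m, weightedDeficit α β σ k := by linarith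

/-- Self-bounding lemma for PBM: for any injective placement `σ` of items into
positions `1..m`, the instantaneous regret dominates half the sum of gaps. -/
theorem pbm_self_bounding
    (n m : ℕ) (hm : 1 ≤ m) (hmn : m ≤ n)
    (α β : ℕ → ℝ)
    (hα01 : ∀ i ∈ Finset.Icc 1 n, α i ∈ Set.Icc (0:ℝ) 1)
    (hαstrict : ∀ i, 1 ≤ i → i ≤ m → α i > α (i + 1))
    (hαmono : ∀ i, m + 1 ≤ i → i < n → α i ≥ α (i + 1))
    (hβ01 : ∀ j ∈ Finset.Icc 1 (m + 1), β j ∈ Set.Icc (0:ℝ) 1)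
    (hβstrict : ∀ j, 1 ≤ j → j ≤ m → β j > β (j + 1))
    (hβlast : β (m + 1) = 0)
    (Δ : ℕ → ℕ → ℝ)
    (hΔ : ∀ i j, Δ i j =
      if j < i then (β j - β (j + 1)) * (α j - α i)
      else if j = i then 0
      else (β (j - 1) - β j) * (α i - α j))
    (σ : ℕ → ℕ)
    (hσinj : Set.InjOn σ (Finset.Icc 1 m))
    (hσrange : ∀ j ∈ Finset.Icc 1 m, σ j ∈ Finset.Icc 1 n) :
    ∑ j ∈ Finset.Icc 1 m, (α j * β j - α (σ j) * β j)
      ≥ (1 / 2) * ∑ j ∈ Finset.Icc 1 m, Δ (σ j) j :=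
  pbm_self_bounding_general n m hmn α β hαstrict hαmono hβstrict hβlast Δ hΔ σ hσinj hσrange
end

section
/- Let α_1 > ⋯ > α_n be reals and β_1 > ⋯ > β_m > β_{m+1} = 0 be reals, with gaps Δ_{i,j} defined as: Δ_{i,j} = (β_j − β_{j+1})(α_j − α_i) for j < i, 0 for j = i, (β_{j−1} − β_j)(α_i − α_j) for j > i. Then for any i_1 > 1 and any k with 2 ≤ k ≤ m, (β_1 − β_k)(α_1 − α_{i_1}) ≥ (1/2)(Δ_{i_1,1} + Δ_{1,k} − Δ_{i_1,k}). -/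
/-- Exchange inequality for the inductive step of the PBM self-bounding lemma. -/
theorem pbm_exchange_inequality
    (n m : ℕ) (hm : 1 ≤ m) (hmn : m ≤ n)
    (α β : ℕ → ℝ)
    (hα01 : ∀ i ∈ Finset.Icc 1 n, α i ∈ Set.Icc (0:ℝ) 1)
    (hαstrict : ∀ i, 1 ≤ i → i < n → α i > α (i + 1))
    (hβpos : ∀ j ∈ Finset.Icc 1 m, 0 < β j ∧ β j ≤ 1)
    (hβstrict : ∀ j, 1 ≤ j → j ≤ m → β j > β (j + 1))
    (hβlast : β (m + 1) = 0)
    (Δ : ℕ → ℕ → ℝ)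
    (hΔ : ∀ i j, Δ i j =
      if j < i then (β j - β (j + 1)) * (α j - α i)
      else if j = i then 0
      else (β (j - 1) - β j) * (α i - α j))
    (i₁ k : ℕ) (hi₁ : 2 ≤ i₁) (hi₁n : i₁ ≤ n) (hk : 2 ≤ k) (hkm : k ≤ m) :
    (β 1 - β k) * (α 1 - α i₁) ≥ (1 / 2) * (Δ i₁ 1 + Δ 1 k - Δ i₁ k) := by
  have hαmono : ∀ i j, 1 ≤ i → i ≤ j → j ≤ n → α j ≤ α i := by
    intro i j h1 hij hjn
    induction j with
    | zero => omega
    | succ j ih =>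
      rcases Nat.eq_or_lt_of_le hij with heq | hlt
      · rw [heq]
      · have hij' : i ≤ j := Nat.lt_succ_iff.mp hlt
        have h1' := ih hij' (by omega)
        have hstep := hαstrict j (by omega) (by omega)
        linarith
  have hβmono : ∀ i j, 1 ≤ i → i ≤ j → j ≤ m + 1 → β j ≤ β i := by
    intro i j h1 hij hjn
    induction j with
    | zero => omega
    | succ j ih =>
      rcases Nat.eq_or_lt_of_le hij with heq | hlt
      · rw [heq]
      · have hij' : i ≤ j := Nat.lt_succ_iff.mp hlt
        have h1' := ih hij' (by omega)
        have hstep := hβstrict j (by omega) (by omega)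
        linarith
  have h1 : Δ i₁ 1 = (β 1 - β 2) * (α 1 - α i₁) := by
    rw [hΔ]; rw [if_pos (by omega)]
  have h2 : Δ 1 k = (β (k - 1) - β k) * (α 1 - α k) := by
    rw [hΔ]; rw [if_neg (by omega), if_neg (by omega)]
  have hA : 0 ≤ α 1 - α i₁ := by
    have := hαmono 1 i₁ (by omega) (by omega) hi₁n; linarith
  have hb2k : β k ≤ β 2 := hβmono 2 k (by omega) hk (by omega)
  have hbk1 : β (k - 1) ≤ β 1 := hβmono 1 (k - 1) (by omega) (by omega) (by omega)
  have hbkk : β k ≤ β (k - 1) := hβmono (k - 1) k (by omega) (by omega) (by omega)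
  have hb1k : β k ≤ β 1 := hβmono 1 k (by omega) (by omega) (by omega)
  rcases lt_trichotomy k i₁ with hki | hki | hki
  · have h3 : Δ i₁ k = (β k - β (k + 1)) * (α k - α i₁) := by
      rw [hΔ]; rw [if_pos hki]
    have hak : α i₁ ≤ α k := hαmono k i₁ (by omega) (by omega) hi₁n
    have ha1k : α k ≤ α 1 := hαmono 1 k (by omega) (by omega) (by omega)
    have hbk : β (k + 1) ≤ β k := hβmono k (k + 1) (by omega) (by omega) (by omega)
    rw [h1, h2, h3]
    nlinarith [mul_nonneg (sub_nonneg.mpr hbk) (sub_nonneg.mpr hak),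
      mul_nonneg (sub_nonneg.mpr hb2k) hA,
      mul_nonneg (sub_nonneg.mpr hbkk) (sub_nonneg.mpr hak),
      mul_nonneg (sub_nonneg.mpr (le_trans hbkk hbk1)) (sub_nonneg.mpr ha1k)]
  · have h3 : Δ i₁ k = 0 := by
      rw [hΔ]; rw [if_neg (by omega), if_pos (by omega)]
    have hak : α k = α i₁ := by rw [hki]
    rw [h1, h2, h3, hak]
    nlinarith [mul_nonneg (sub_nonneg.mpr hb2k) hA,
      mul_nonneg (sub_nonneg.mpr hb1k) hA]
  · have h3 : Δ i₁ k = (β (k - 1) - β k) * (α i₁ - α k) := by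
      rw [hΔ]; rw [if_neg (by omega), if_neg (by omega)]
    rw [h1, h2, h3]
    nlinarith [mul_nonneg (sub_nonneg.mpr hb2k) hA,
      mul_nonneg (sub_nonneg.mpr (hbk1.trans (le_refl (β 1)))) hA,
      mul_nonneg (sub_nonneg.mpr hbkk) hA]
end

section
/- Let y ≤ 0 (coordinatewise) in ℝ^{n×m} and η > 0. Define Ψ̃(x) = ∑_{i,j} (−√(x_{i,j}) + x_{i,j}) on the domain D = [0,∞)^{n×m}. Then the Fenchel conjugate of x ↦ (1/η)Ψ̃(x) at y equals ∑_{i,j} 1/(4η(1 − η y_{i,j})). -/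
open Finset

private lemma tsallis_aux_ub (η : ℝ) (hη : 0 < η) (y t : ℝ) (hy : y ≤ 0) (ht : 0 ≤ t) :
    t * y - (1 / η) * (-Real.sqrt t + t) ≤ 1 / (4 * η * (1 - η * y)) := by
  have ha : 0 < 1 - η * y := by nlinarith
  set s := Real.sqrt t with hsdef
  have hs : s ^ 2 = t := Real.sq_sqrt ht
  have h1 : t * y - (1 / η) * (-s + t) = (s - (1 - η * y) * s ^ 2) / η := by
    field_simp
    nlinarith [hs]
  rw [h1, div_le_div_iff₀ hη (by positivity)]
  nlinarith [sq_nonneg (2 * (1 - η * y) * s - 1), mul_nonneg hη.le (sq_nonneg (2 * (1 - η * y) * s - 1))]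

private lemma tsallis_aux_eq (η : ℝ) (hη : 0 < η) (y : ℝ) (hy : y ≤ 0) :
    (1 / (4 * (1 - η * y) ^ 2)) * y
      - (1 / η) * (-Real.sqrt (1 / (4 * (1 - η * y) ^ 2)) + 1 / (4 * (1 - η * y) ^ 2))
      = 1 / (4 * η * (1 - η * y)) := by
  have ha : 0 < 1 - η * y := by nlinarith
  rw [show (1 : ℝ) / (4 * (1 - η * y) ^ 2) = (1 / (2 * (1 - η * y))) ^ 2 by rw [div_pow]; ring_nf,
    Real.sqrt_sq (by positivity)]
  field_simp
  ring

/-- Fenchel conjugate of the (scaled) shifted 1/2-Tsallis entropy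
`Ψ̃(x) = ∑_{i,j} (-√x_{i,j} + x_{i,j})` on the domain `D = [0,∞)^{n×m}`:
for coordinatewise nonpositive `y`, the supremum of `⟨x,y⟩ - (1/η)Ψ̃(x)` over `D`
is attained and equals `∑_{i,j} 1/(4η(1 - η y_{i,j}))`. -/
theorem tsallis_fenchel_conjugate (n m : ℕ) (η : ℝ) (hη : 0 < η)
    (y : Fin n → Fin m → ℝ) (hy : ∀ i j, y i j ≤ 0) :
    IsGreatest
      {v : ℝ | ∃ x : Fin n → Fin m → ℝ, (∀ i j, 0 ≤ x i j) ∧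
        v = (∑ i, ∑ j, x i j * y i j)
            - (1 / η) * (∑ i, ∑ j, (-Real.sqrt (x i j) + x i j))}
      (∑ i, ∑ j, 1 / (4 * η * (1 - η * y i j))) := by
  constructor
  · refine ⟨fun i j => 1 / (4 * (1 - η * y i j) ^ 2), fun i j => by positivity, ?_⟩
    rw [Finset.mul_sum, ← Finset.sum_sub_distrib]
    refine Finset.sum_congr rfl fun i _ => ?_
    rw [Finset.mul_sum, ← Finset.sum_sub_distrib]
    exact Finset.sum_congr rfl fun j _ => (tsallis_aux_eq η hη (y i j) (hy i j)).symm
  · rintro v ⟨x, hx, rfl⟩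
    rw [Finset.mul_sum, ← Finset.sum_sub_distrib]
    refine Finset.sum_le_sum fun i _ => ?_
    rw [Finset.mul_sum, ← Finset.sum_sub_distrib]
    exact Finset.sum_le_sum fun j _ => tsallis_aux_ub η hη (y i j) (x i j) (hy i j) (hx i j)
end
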